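/- arXiv:2504.19741 — 2 statements merged into one kernel-verified Lean document; each statement's English description precedes it below -/
import Mathlib

section
/- Let C be the unique root in (0,∞) of h(c) = 2∫₀^c e^{t²/2} dt − c·e^{c²/2}, and let B = C² / (∫₀^C e^{t²/2} dt). Then the function f(y) = (B/y)∫₀^y e^{t²/2} dt satisfies f(y) ≥ y for all y ∈ (0,C]. -/
/-!
Write `I y = ∫₀^y e^{t²/2} dt` and `h = 2I - y e^{y²/2}`, so that `h' = e^{y²/2}(1 - y²)` and
`(I y / y²)' = -h y / y³`. Since `h 0 = 0 = h C` and `h` rises on `[0, 1]` and falls on `[1, ∞)`,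
`h ≥ 0` on `[0, C]`, hence `I y / y²` is antitone on `(0, C]`. The inequality `y ≤ f y` is
exactly `I C / C² ≤ I y / y²`.
-/

open Real Set

noncomputable def expHalfSqIntegral (y : ℝ) : ℝ := ∫ t in (0:ℝ)..y, exp (t ^ 2 / 2)

noncomputable def expHalfSqDefect (y : ℝ) : ℝ := 2 * expHalfSqIntegral y - y * exp (y ^ 2 / 2)

lemma continuous_exp_sq_half : Continuous fun t : ℝ => exp (t ^ 2 / 2) := by
  fun_prop

lemma hasDerivAt_expHalfSqIntegral (y : ℝ) :
    HasDerivAt expHalfSqIntegral (exp (y ^ 2 / 2)) y :=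
  continuous_exp_sq_half.integral_hasStrictDerivAt 0 y |>.hasDerivAt

lemma expHalfSqIntegral_pos {y : ℝ} (hy : 0 < y) : 0 < expHalfSqIntegral y :=
  intervalIntegral.intervalIntegral_pos_of_pos_on (continuous_exp_sq_half.intervalIntegrable _ _)
    (fun _ _ => exp_pos _) hy

lemma hasDerivAt_expHalfSqDefect (y : ℝ) :
    HasDerivAt expHalfSqDefect (exp (y ^ 2 / 2) * (1 - y ^ 2)) y := by
  have hexp : HasDerivAt (fun u : ℝ => exp (u ^ 2 / 2)) (exp (y ^ 2 / 2) * y) y := by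
    simpa using ((hasDerivAt_pow 2 y).div_const 2).exp
  have := ((hasDerivAt_expHalfSqIntegral y).const_mul 2).sub ((hasDerivAt_id y).mul hexp)
  exact this.congr_deriv (by simp only [id]; ring)

lemma continuous_expHalfSqDefect : Continuous expHalfSqDefect :=
  continuous_iff_continuousAt.2 fun y => (hasDerivAt_expHalfSqDefect y).continuousAt

lemma monotoneOn_expHalfSqDefect : MonotoneOn expHalfSqDefect (Icc (-1) 1) := by
  refine monotoneOn_of_hasDerivWithinAt_nonneg (convex_Icc _ _)
    continuous_expHalfSqDefect.continuousOn
    (fun x _ => (hasDerivAt_expHalfSqDefect x).hasDerivWithinAt) fun x hx => ?_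
  rw [interior_Icc] at hx
  have : x ^ 2 ≤ 1 := by nlinarith [hx.1, hx.2]
  exact mul_nonneg (exp_pos _).le (by linarith)

lemma antitoneOn_expHalfSqDefect : AntitoneOn expHalfSqDefect (Ici 1) := by
  refine antitoneOn_of_hasDerivWithinAt_nonpos (convex_Ici _)
    continuous_expHalfSqDefect.continuousOn
    (fun x _ => (hasDerivAt_expHalfSqDefect x).hasDerivWithinAt) fun x hx => ?_
  rw [interior_Ici] at hx
  have : 1 ≤ x ^ 2 := by nlinarith [mem_Ioi.1 hx]
  exact mul_nonpos_of_nonneg_of_nonpos (exp_pos _).le (by linarith)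

lemma expHalfSqDefect_nonneg {c y : ℝ} (hc : 0 ≤ expHalfSqDefect c) (hy : y ∈ Icc 0 c) :
    0 ≤ expHalfSqDefect y := by
  rcases le_total y 1 with hy1 | hy1
  · have h0 : expHalfSqDefect 0 = 0 := by simp [expHalfSqDefect, expHalfSqIntegral]
    have := monotoneOn_expHalfSqDefect (by norm_num) ⟨by linarith [hy.1], hy1⟩ hy.1
    rwa [h0] at this
  · exact hc.trans <| antitoneOn_expHalfSqDefect hy1 (hy1.trans hy.2) hy.2

lemma antitoneOn_div_sq_of_mul_deriv_le {F F' : ℝ → ℝ} {c : ℝ}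
    (hF : ∀ x ∈ Ioc 0 c, HasDerivAt F (F' x) x) (hle : ∀ x ∈ Ioc 0 c, x * F' x ≤ 2 * F x) :
    AntitoneOn (fun x => F x / x ^ 2) (Ioc 0 c) := by
  have hderiv : ∀ x ∈ Ioc 0 c,
      HasDerivAt (fun x => F x / x ^ 2) ((F' x * x ^ 2 - F x * (2 * x)) / (x ^ 2) ^ 2) x :=
    fun x hx => (hF x hx).div (by simpa using hasDerivAt_pow 2 x) (by positivity [hx.1.ne'])
  refine antitoneOn_of_hasDerivWithinAt_nonpos (convex_Ioc 0 c)
    (fun x hx => (hderiv x hx).continuousAt.continuousWithinAt)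
    (fun x hx => (hderiv x (interior_subset hx)).hasDerivWithinAt) fun x hx => ?_
  rw [interior_Ioc] at hx
  have hx0 : 0 < x := hx.1
  have hnum : F' x * x ^ 2 - F x * (2 * x) = x * (x * F' x - 2 * F x) := by ring
  rw [hnum]
  exact div_nonpos_of_nonpos_of_nonneg
    (mul_nonpos_of_nonneg_of_nonpos hx0.le (by linarith [hle x ⟨hx0, hx.2.le⟩])) (by positivity)

lemma expHalfSqIntegral_div_sq_le {c y : ℝ} (hc : 0 ≤ expHalfSqDefect c) (hy : y ∈ Ioc 0 c) :
    expHalfSqIntegral c / c ^ 2 ≤ expHalfSqIntegral y / y ^ 2 := by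
  refine antitoneOn_div_sq_of_mul_deriv_le (fun x _ => hasDerivAt_expHalfSqIntegral x)
    (fun x hx => ?_) hy ⟨hy.1.trans_le hy.2, le_rfl⟩ hy.2
  have := expHalfSqDefect_nonneg hc ⟨hx.1.le, hx.2⟩
  rw [expHalfSqDefect] at this
  linarith

theorem stmt_4_general (C B : ℝ)
    (hCroot : 2 * (∫ t in (0:ℝ)..C, Real.exp (t ^ 2 / 2)) - C * Real.exp (C ^ 2 / 2) = 0)
    (hB : B = C ^ 2 / ∫ t in (0:ℝ)..C, Real.exp (t ^ 2 / 2))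
    (f : ℝ → ℝ)
    (hf : ∀ y : ℝ, f y = (B / y) * ∫ t in (0:ℝ)..y, Real.exp (t ^ 2 / 2)) :
    ∀ y ∈ Set.Ioc (0:ℝ) C, y ≤ f y := by
  intro y hy
  have hy0 : 0 < y := hy.1
  have hC0 : 0 < C := hy0.trans_le hy.2
  have hIC : 0 < expHalfSqIntegral C := expHalfSqIntegral_pos hC0
  have key := expHalfSqIntegral_div_sq_le hCroot.ge hy
  rw [div_le_div_iff₀ (by positivity) (by positivity)] at key
  rw [hf, hB, div_div, div_mul_eq_mul_div, le_div_iff₀ (by positivity)]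
  change y * (expHalfSqIntegral C * y) ≤ C ^ 2 * expHalfSqIntegral y
  linear_combination key

/-- Let `C` be the unique positive root of `h(c) = 2∫₀^c e^{t²/2} dt − c·e^{c²/2}` and
`B = C²/∫₀^C e^{t²/2} dt`. Then `f(y) = (B/y)∫₀^y e^{t²/2} dt` satisfies `f(y) ≥ y`
for all `y ∈ (0,C]`. -/
theorem stmt_4 (C B : ℝ) (hCpos : 0 < C)
    (hCroot : 2 * (∫ t in (0:ℝ)..C, Real.exp (t ^ 2 / 2)) - C * Real.exp (C ^ 2 / 2) = 0)
    (hCuniq : ∀ c : ℝ, 0 < c →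
      2 * (∫ t in (0:ℝ)..c, Real.exp (t ^ 2 / 2)) - c * Real.exp (c ^ 2 / 2) = 0 → c = C)
    (hB : B = C ^ 2 / ∫ t in (0:ℝ)..C, Real.exp (t ^ 2 / 2))
    (f : ℝ → ℝ)
    (hf : ∀ y : ℝ, f y = (B / y) * ∫ t in (0:ℝ)..y, Real.exp (t ^ 2 / 2)) :
    ∀ y ∈ Set.Ioc (0:ℝ) C, y ≤ f y :=
  stmt_4_general C B hCroot hB f hf
end

section
/- For every α > 0 and n > 0, the unique positive root Z_{α,n} of F_{α,n}(z) = Σ_{k=0}^∞ (2k − n)·A_k·z^k satisfies Z_{α,n} ≥ (α + n − 2)/2. -/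
/-!
Put `w k = A k Z ^ k > 0`, `a = α / 2`, `c = n / 2`. The recurrence of the Gamma factors gives
`2 (k + 1) (k + a) w (k + 1) = Z (k + c) w k`, so all moments of `w` converge (ratio test), and
shifting the index turns this into the moment identity `∑ 2 k (k + a - 1) w k = Z ∑ (k + c) w k`.
The root condition `F Z = 0` says that the weights `w` have mean `c`. Then the variance
`∑ (k - c) ^ 2 w k` equals `c (Z - (c + a - 1)) ∑ w k`, and it is nonnegative.
-/

open Real Filter Topology Nat

/-- The coefficient `A_k` for `a = α / 2`, `c = n / 2`, i.e. `(c)_k / ((a)_k 2 ^ k k!)`, the `k`-th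
coefficient of Kummer's function `M(c, a, z / 2)`. -/
noncomputable def kummerCoeff (a c : ℝ) (k : ℕ) : ℝ :=
  Gamma a / Gamma c * (Gamma (k + c) / (Gamma (k + a) * 2 ^ k * k !))

theorem kummerCoeff_pos {a c : ℝ} (ha : 0 < a) (hc : 0 < c) (k : ℕ) :
    0 < kummerCoeff a c k := by
  have := Gamma_pos_of_pos ha
  have := Gamma_pos_of_pos hc
  have := Gamma_pos_of_pos (by positivity : (0 : ℝ) < k + a)
  have := Gamma_pos_of_pos (by positivity : (0 : ℝ) < k + c)
  unfold kummerCoeff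
  positivity

theorem kummerCoeff_succ {a c : ℝ} (ha : 0 < a) (hc : 0 < c) (k : ℕ) :
    2 * (k + 1) * (k + a) * kummerCoeff a c (k + 1) = (k + c) * kummerCoeff a c k := by
  have hΓ : Gamma (k + a) ≠ 0 := (Gamma_pos_of_pos (by positivity)).ne'
  have hΓa : Gamma ((k + 1 : ℕ) + a) = (k + a) * Gamma (k + a) := by
    rw [Nat.cast_succ, add_right_comm, Gamma_add_one (by positivity)]
  have hΓc : Gamma ((k + 1 : ℕ) + c) = (k + c) * Gamma (k + c) := by
    rw [Nat.cast_succ, add_right_comm, Gamma_add_one (by positivity)]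
  unfold kummerCoeff
  rw [hΓa, hΓc, factorial_succ]
  push_cast
  field_simp
  ring

theorem summable_pow_mul_of_tendsto_ratio_zero {f : ℕ → ℝ} (hf : ∀ k, 0 < f k)
    (h : Tendsto (fun k => f (k + 1) / f k) atTop (𝓝 0)) (m : ℕ) :
    Summable fun k : ℕ => (k : ℝ) ^ m * f k := by
  refine summable_of_ratio_test_tendsto_lt_one zero_lt_one ?_ ?_
  · filter_upwards [eventually_ne_atTop 0] with k hk
    have := hf k
    positivity
  · have hpow : Tendsto (fun k : ℕ => ((1 + 1 * (k : ℝ)) / (0 + 1 * k)) ^ m) atTop (𝓝 1) := by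
      simpa using (tendsto_add_mul_div_add_mul_atTop_nhds (1 : ℝ) 0 1 one_ne_zero).pow m
    have hlim : Tendsto (fun k : ℕ => ((1 + (k : ℝ)) / k) ^ m * (f (k + 1) / f k)) atTop
        (𝓝 0) := by
      simpa using hpow.mul h
    refine hlim.congr' ?_
    filter_upwards [eventually_ne_atTop 0] with k hk
    have : (k : ℝ) ≠ 0 := by exact_mod_cast hk
    rw [norm_mul, norm_mul, norm_pow, norm_pow, Real.norm_of_nonneg (hf k).le,
      Real.norm_of_nonneg (hf (k + 1)).le]
    simp only [RCLike.norm_natCast]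
    push_cast
    rw [div_pow, add_comm (1 : ℝ)]
    field_simp

section Recurrence

variable {a c Z : ℝ} {w : ℕ → ℝ}

theorem tendsto_ratio_zero_of_recurrence (ha : 0 < a) (hw : ∀ k, 0 < w k)
    (hrec : ∀ k : ℕ, 2 * (k + 1) * (k + a) * w (k + 1) = Z * (k + c) * w k) :
    Tendsto (fun k => w (k + 1) / w k) atTop (𝓝 0) := by
  have hlim : Tendsto (fun k : ℕ => Z / 2 * ((c + 1 * k) / (a + 1 * k)) * (1 / ((k : ℝ) + 1)))
      atTop (𝓝 0) := by
    simpa using (tendsto_const_nhds.mul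
      (tendsto_add_mul_div_add_mul_atTop_nhds c a 1 one_ne_zero)).mul
      tendsto_one_div_add_atTop_nhds_zero_nat
  refine hlim.congr fun k => ?_
  have : (0 : ℝ) < k + a := by positivity
  rw [eq_div_iff (hw k).ne',
    ← mul_left_cancel_iff_of_pos (by positivity : (0 : ℝ) < 2 * (k + 1) * (k + a)), hrec k]
  field_simp
  ring

theorem add_sub_one_le_of_tsum_sub_mul_eq_zero (ha : 0 < a) (hc : 0 < c) (hw : ∀ k, 0 < w k)
    (hrec : ∀ k : ℕ, 2 * (k + 1) * (k + a) * w (k + 1) = Z * (k + c) * w k)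
    (hmean : ∑' k : ℕ, ((k : ℝ) - c) * w k = 0) : c + a - 1 ≤ Z := by
  have hratio := tendsto_ratio_zero_of_recurrence ha hw hrec
  have hs0 : Summable w := by simpa using summable_pow_mul_of_tendsto_ratio_zero hw hratio 0
  have hs1 : Summable fun k : ℕ => (k : ℝ) * w k := by
    simpa using summable_pow_mul_of_tendsto_ratio_zero hw hratio 1
  set S := ∑' k, w k
  have hS : HasSum w S := hs0.hasSum
  have hmeanSum : HasSum (fun k : ℕ => ((k : ℝ) - c) * w k) 0 := by
    rw [← hmean]
    exact ((hs1.sub (hs0.mul_left c)).congr fun k => by ring).hasSum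
  have hshift : HasSum (fun k : ℕ => 2 * k * (k + a - 1) * w k) (Z * (2 * c * S)) := by
    have hsucc := (hmeanSum.add (hS.mul_left (2 * c))).mul_left Z
    have e : (fun k : ℕ => Z * (((k : ℝ) - c) * w k + 2 * c * w k)) =
        fun k : ℕ => 2 * ((k + 1 : ℕ) : ℝ) * ((k + 1 : ℕ) + a - 1) * w (k + 1) := by
      funext k
      push_cast
      linear_combination -hrec k
    rw [e, zero_add] at hsucc
    simpa using HasSum.zero_add (f := fun k : ℕ => 2 * (k : ℝ) * (k + a - 1) * w k) hsucc
  have hvar : HasSum (fun k : ℕ => ((k : ℝ) - c) ^ 2 * w k) (c * S * (Z - (c + a - 1))) := by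
    have h := (hshift.div_const 2).sub ((hmeanSum.mul_left (2 * c + a - 1)).add
      (hS.mul_left (c * (c + a - 1))))
    have e : (fun k : ℕ => 2 * (k : ℝ) * (k + a - 1) * w k / 2 -
        ((2 * c + a - 1) * (((k : ℝ) - c) * w k) + c * (c + a - 1) * w k)) =
        fun k : ℕ => ((k : ℝ) - c) ^ 2 * w k := by
      funext k
      ring
    rw [e] at h
    rwa [show c * S * (Z - (c + a - 1)) =
      Z * (2 * c * S) / 2 - ((2 * c + a - 1) * 0 + c * (c + a - 1) * S) by ring]
  have hvar_nonneg : 0 ≤ c * S * (Z - (c + a - 1)) :=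
    hasSum_le (fun k => by have := hw k; positivity) hasSum_zero hvar
  have hS_pos : 0 < S := hs0.tsum_pos (fun k => (hw k).le) 0 (hw 0)
  exact sub_nonneg.1 (nonneg_of_mul_nonneg_right (by linarith [hvar_nonneg]) (mul_pos hc hS_pos))

end Recurrence

theorem stmt_13_general (α n : ℝ) (hα : 0 < α) (hn : 0 < n) (A : ℕ → ℝ)
    (hA : ∀ k : ℕ,
      A k = Real.Gamma (α / 2) / Real.Gamma (n / 2) *
        (Real.Gamma ((k : ℝ) + n / 2) /
          (Real.Gamma ((k : ℝ) + α / 2) * 2 ^ k * (Nat.factorial k : ℝ))))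
    (F : ℝ → ℝ) (hF : ∀ z : ℝ, F z = ∑' k : ℕ, (2 * (k : ℝ) - n) * A k * z ^ k)
    (Z : ℝ) (hZpos : 0 < Z) (hZroot : F Z = 0) :
    (α + n - 2) / 2 ≤ Z := by
  obtain rfl : A = kummerCoeff (α / 2) (n / 2) := funext hA
  have ha : 0 < α / 2 := by positivity
  have hc : 0 < n / 2 := by positivity
  have hw (k : ℕ) : 0 < kummerCoeff (α / 2) (n / 2) k * Z ^ k :=
    mul_pos (kummerCoeff_pos ha hc k) (pow_pos hZpos k)
  have hrec (k : ℕ) :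
      2 * (k + 1) * (k + α / 2) * (kummerCoeff (α / 2) (n / 2) (k + 1) * Z ^ (k + 1)) =
        Z * (k + n / 2) * (kummerCoeff (α / 2) (n / 2) k * Z ^ k) := by
    linear_combination Z ^ (k + 1) * kummerCoeff_succ ha hc k
  have hmean : ∑' k : ℕ, ((k : ℝ) - n / 2) * (kummerCoeff (α / 2) (n / 2) k * Z ^ k) = 0 := by
    rw [hF] at hZroot
    rw [← mul_right_inj' (two_ne_zero' ℝ), ← tsum_mul_left, mul_zero, ← hZroot]
    exact tsum_congr fun k => by ring
  linarith [add_sub_one_le_of_tsum_sub_mul_eq_zero ha hc hw hrec hmean]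

/-- For every `α > 0` and `n > 0`, the unique positive root `Z` of
`F(z) = Σ (2k − n)·A_k·z^k` satisfies `Z ≥ (α + n − 2)/2`. -/
theorem stmt_13 (α n : ℝ) (hα : 0 < α) (hn : 0 < n) (A : ℕ → ℝ)
    (hA : ∀ k : ℕ,
      A k = Real.Gamma (α / 2) / Real.Gamma (n / 2) *
        (Real.Gamma ((k : ℝ) + n / 2) /
          (Real.Gamma ((k : ℝ) + α / 2) * 2 ^ k * (Nat.factorial k : ℝ))))
    (F : ℝ → ℝ) (hF : ∀ z : ℝ, F z = ∑' k : ℕ, (2 * (k : ℝ) - n) * A k * z ^ k)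
    (Z : ℝ) (hZpos : 0 < Z) (hZroot : F Z = 0)
    (hZuniq : ∀ z : ℝ, 0 < z → F z = 0 → z = Z) :
    (α + n - 2) / 2 ≤ Z :=
  stmt_13_general α n hα hn A hA F hF Z hZpos hZroot
end
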